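/- Consider the constrained maximization of $f(\omega) = \frac{1}{N}\log\left(\sum_{k=1}^K \omega_k \ell_k\right) - \mu \sum_{k=1}^K \tilde{\omega}_k \log\frac{\tilde{\omega}_k}{\omega_k}$ over probability vectors $\omega \in \Delta^{K-1}$ with strictly positive entries, where $\ell_k > 0$ and $\tilde{\omega}$ is a fixed probability vector with positive entries. Then any interior critical point of the Lagrangian satisfies $\omega_k = \frac{\gamma_k}{1+\mu N} + \frac{\mu N}{1+\mu N}\tilde{\omega}_k$, where $\gamma_k = \frac{\omega_k \ell_k}{\sum_{n=1}^K \omega_n \ell_n}$. -/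
import Mathlib


/-- Any interior critical point of the Lagrangian of the regularized
clustering objective satisfies
`ω k = γ k / (1 + μN) + μN/(1 + μN) * ω̃ k` with `γ k = ω k * ℓ k / ∑ₙ ω n * ℓ n`. -/
theorem lagrangian_critical_point (K : ℕ) (N μ : ℝ) (hN : 0 < N) (hμ : 0 ≤ μ)
    (ℓ ωt ω : Fin K → ℝ)
    (hℓ : ∀ k, 0 < ℓ k) (hωtpos : ∀ k, 0 < ωt k) (hωtsum : ∑ k, ωt k = 1)
    (hωpos : ∀ k, 0 < ω k) (hωsum : ∑ k, ω k = 1)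
    (lam : ℝ)
    (hstat : ∀ k, (1 / N) * (ℓ k / ∑ n, ω n * ℓ n) + lam + μ * (ωt k / ω k) = 0) :
    ∀ k, ω k = (ω k * ℓ k / ∑ n, ω n * ℓ n) / (1 + μ * N)
        + (μ * N) / (1 + μ * N) * ωt k := by
  intro k
  set S := ∑ n, ω n * ℓ n with hSdef
  have hK : 0 < K := by
    by_contra h
    have : K = 0 := by omega
    subst this
    simp at hωsum
  have hS : 0 < S := by
    apply Finset.sum_pos
    · intro i _
      exact mul_pos (hωpos i) (hℓ i)
    · exact Finset.univ_nonempty_iff.mpr ⟨⟨0, hK⟩⟩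
  -- multiply stationarity by ω k
  have hmul : ∀ j, (1 / N) * (ω j * ℓ j / S) + lam * ω j + μ * ωt j = 0 := by
    intro j
    have h := hstat j
    have hωj := (hωpos j).ne'
    have hNne := hN.ne'
    have hSne := hS.ne'
    field_simp at h ⊢
    nlinarith [h, hωpos j]
  -- sum over j
  have hsum : (1 / N) + lam + μ = 0 := by
    have hsum0 : ∑ j, ((1 / N) * (ω j * ℓ j / S) + lam * ω j + μ * ωt j) = 0 := by
      exact Finset.sum_eq_zero fun j _ => hmul j
    have h1 : ∑ j, (ω j * ℓ j / S) = 1 := by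
      rw [← Finset.sum_div, ← hSdef, div_self hS.ne']
    calc (1 / N) + lam + μ
        = (1 / N) * (∑ j, (ω j * ℓ j / S)) + lam * (∑ j, ω j) + μ * (∑ j, ωt j) := by
          rw [h1, hωsum, hωtsum]; ring
      _ = ∑ j, ((1 / N) * (ω j * ℓ j / S) + lam * ω j + μ * ωt j) := by
          rw [Finset.sum_add_distrib, Finset.sum_add_distrib, Finset.mul_sum,
            Finset.mul_sum, Finset.mul_sum]
      _ = 0 := hsum0
  have hlam : lam = -(1 / N + μ) := by linarith
  have hk := hmul k
  rw [hlam] at hk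
  have h1N : 0 < 1 + μ * N := by nlinarith
  have hNne := hN.ne'
  field_simp at hk ⊢
  nlinarith [hk]
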